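/- Let X be a vector space with a complete invariant metric d satisfying d(λx, λy) ≤ λ d(x,y) for λ ∈ [0,1), and let f : [a,b] → X be Riemann integrable. Define F(t) := ∫ₐᵗ f(s) ds. Then at every point t ∈ [a,b] at which f is continuous, F is differentiable with F'(t) = f(t), i.e., d(0, F(t+s) − F(t) − s·f(t)) = o(|s|) as s → 0. -/

import Mathlib

open Set MeasureTheory

/-- A tagged partition of `[a,b]`: points `a = t 0 < t 1 < ⋯ < t n = b`
with tags `s i ∈ [t i, t (i+1)]`. -/
structure TaggedPartition (a b : ℝ) where
  n : ℕ
  t : ℕ → ℝ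
  s : ℕ → ℝ
  npos : 0 < n
  left : t 0 = a
  right : t n = b
  mono : ∀ i < n, t i < t (i + 1)
  tag_mem : ∀ i < n, s i ∈ Set.Icc (t i) (t (i + 1))

/-- The mesh of the partition is `< δ`. -/
def TaggedPartition.MeshLT {a b : ℝ} (P : TaggedPartition a b) (δ : ℝ) : Prop :=
  ∀ i < P.n, P.t (i + 1) - P.t i < δ

/-- The set of partition points of a tagged partition. -/
def TaggedPartition.points {a b : ℝ} (P : TaggedPartition a b) : Set ℝ :=
  {x | ∃ i ≤ P.n, P.t i = x}

/-- The Riemann sum `f(Δ) = Σᵢ (tᵢ₊₁ - tᵢ) • f(sᵢ)`. -/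
def riemannSum {X : Type*} [AddCommGroup X] [Module ℝ X]
    (f : ℝ → X) {a b : ℝ} (P : TaggedPartition a b) : X :=
  ∑ i ∈ Finset.range P.n, (P.t (i + 1) - P.t i) • f (P.s i)

/-- `f` has Riemann integral `x` on `[a,b]` (mesh-based definition, metric `dist`). -/
def HasRiemannIntegral {X : Type*} [MetricSpace X] [AddCommGroup X] [Module ℝ X]
    (f : ℝ → X) (a b : ℝ) (x : X) : Prop :=
  ∀ ε > 0, ∃ δ > 0, ∀ P : TaggedPartition a b, P.MeshLT δ →
    dist (riemannSum f P) x < ε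

/-! Near `t`, `F d - F c` is the Riemann integral of `f` over `[c, d]`: split a fine partition
of `[a, d]` at `c`. Translation invariance makes the distance subadditive on sums, and `hscale`
bounds each term `(tᵢ₊₁ - tᵢ) • f sᵢ` of a Riemann sum of mesh `< 1`; hence when `f` is `ε`-close
to `f t` on `[c, d]`, the integral is within `ε (d - c)` of `(d - c) • f t`. -/

namespace TaggedPartition

variable {a b c d : ℝ}

lemma strictMonoOn_t (P : TaggedPartition a b) : StrictMonoOn P.t (Iic P.n) :=
  strictMonoOn_Iic_of_lt_succ fun m hm => by simpa using P.mono m hm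

lemma s_mem_Icc (P : TaggedPartition a b) {i : ℕ} (hi : i < P.n) : P.s i ∈ Icc a b := by
  have hle : ∀ {j k : ℕ}, j ≤ k → k ≤ P.n → P.t j ≤ P.t k := fun hjk hk =>
    P.strictMonoOn_t.monotoneOn (mem_Iic.2 (hjk.trans hk)) (mem_Iic.2 hk) hjk
  obtain ⟨h₁, h₂⟩ := P.tag_mem i hi
  exact ⟨P.left.symm.trans_le ((hle (Nat.zero_le i) hi.le).trans h₁),
    (h₂.trans (hle hi le_rfl)).trans_eq P.right⟩

lemma sum_sub_eq (P : TaggedPartition a b) :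
    ∑ i ∈ Finset.range P.n, (P.t (i + 1) - P.t i) = b - a := by
  rw [Finset.sum_range_sub, P.left, P.right]

lemma MeshLT.mono {P : TaggedPartition a b} {δ δ' : ℝ} (h : P.MeshLT δ) (hle : δ ≤ δ') :
    P.MeshLT δ' :=
  fun i hi => (h i hi).trans_le hle

noncomputable def uniform (hab : a < b) (n : ℕ) (hn : 0 < n) : TaggedPartition a b where
  n := n
  t i := a + i * ((b - a) / n)
  s i := a + i * ((b - a) / n)
  npos := hn
  left := by simp
  right := by field_simp; ring
  mono i _ := by
    have : 0 < (b - a) / n := div_pos (by linarith) (by exact_mod_cast hn)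
    push_cast
    linarith
  tag_mem i _ := by
    have : 0 < (b - a) / n := div_pos (by linarith) (by exact_mod_cast hn)
    push_cast
    constructor <;> linarith

lemma exists_meshLT (hab : a < b) {δ : ℝ} (hδ : 0 < δ) : ∃ P : TaggedPartition a b, P.MeshLT δ := by
  obtain ⟨n, hn⟩ := exists_nat_gt ((b - a) / δ)
  have hn₀ : 0 < n := by
    have : 0 < (b - a) / δ := div_pos (by linarith) hδ
    exact_mod_cast this.trans hn
  refine ⟨uniform hab n hn₀, fun i _ => ?_⟩
  have h : (uniform hab n hn₀).t (i + 1) - (uniform hab n hn₀).t i = (b - a) / n := by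
    simp only [uniform]; push_cast; ring
  rw [h, div_lt_iff₀ (by exact_mod_cast hn₀)]
  rw [div_lt_iff₀ hδ] at hn
  linarith

def append (P : TaggedPartition a c) (Q : TaggedPartition c d) : TaggedPartition a d where
  n := P.n + Q.n
  t i := if i < P.n then P.t i else Q.t (i - P.n)
  s i := if i < P.n then P.s i else Q.s (i - P.n)
  npos := Nat.add_pos_left P.npos _
  left := by simp [P.npos, P.left]
  right := by simp [Q.right]
  mono i hi := by
    split_ifs with h₁ h₂ h₂
    · exact P.mono i h₁
    · have hend : i + 1 = P.n := by omega
      simpa [hend, Q.left, P.right] using P.mono i h₁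
    · omega
    · rw [show i + 1 - P.n = i - P.n + 1 by omega]
      exact Q.mono _ (by omega)
  tag_mem i hi := by
    split_ifs with h₁ h₂ h₂
    · exact P.tag_mem i h₁
    · have hend : i + 1 = P.n := by omega
      simpa [hend, Q.left, P.right] using P.tag_mem i h₁
    · omega
    · rw [show i + 1 - P.n = i - P.n + 1 by omega]
      exact Q.tag_mem _ (by omega)

variable (P : TaggedPartition a c) (Q : TaggedPartition c d)

lemma append_t_of_lt {i : ℕ} (h : i < P.n) : (P.append Q).t i = P.t i := if_pos h

lemma append_t_of_le {i : ℕ} (h : P.n ≤ i) : (P.append Q).t i = Q.t (i - P.n) :=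
  if_neg (not_lt.2 h)

lemma append_t_succ_of_lt {i : ℕ} (h : i < P.n) : (P.append Q).t (i + 1) = P.t (i + 1) := by
  rcases (show i + 1 ≤ P.n from h).lt_or_eq with h' | h'
  · exact P.append_t_of_lt Q h'
  · rw [P.append_t_of_le Q h'.ge, h', Nat.sub_self, Q.left, P.right]

lemma MeshLT.append {δ : ℝ} (hP : P.MeshLT δ) (hQ : Q.MeshLT δ) : (P.append Q).MeshLT δ := by
  intro i hi
  rcases lt_or_ge i P.n with h | h
  · rw [P.append_t_succ_of_lt Q h, P.append_t_of_lt Q h]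
    exact hP i h
  · rw [P.append_t_of_le Q (by omega), P.append_t_of_le Q h,
      show i + 1 - P.n = i - P.n + 1 by omega]
    exact hQ _ (by simp only [TaggedPartition.append] at hi; omega)

lemma riemannSum_append {X : Type*} [AddCommGroup X] [Module ℝ X] (f : ℝ → X) :
    riemannSum f (P.append Q) = riemannSum f P + riemannSum f Q := by
  rw [riemannSum, show (P.append Q).n = P.n + Q.n from rfl, Finset.sum_range_add]
  congr 1
  · refine Finset.sum_congr rfl fun i hi => ?_
    have h := Finset.mem_range.1 hi
    rw [P.append_t_succ_of_lt Q h, P.append_t_of_lt Q h]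
    simp only [TaggedPartition.append, if_pos h]
  · refine Finset.sum_congr rfl fun j _ => ?_
    simp only [TaggedPartition.append, show ¬ P.n + j < P.n by omega,
      show ¬ P.n + j + 1 < P.n by omega, if_false, Nat.add_sub_cancel_left,
      show P.n + j + 1 - P.n = j + 1 by omega]

end TaggedPartition

section InvariantMetric

variable {X : Type*} [MetricSpace X] [AddCommGroup X]
  (hinv : ∀ x y z : X, dist (x + z) (y + z) = dist x y)
include hinv

lemma dist_add_left_of_invariant (x y z : X) : dist (z + x) (z + y) = dist x y := by
  rw [add_comm z, add_comm z, hinv]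

lemma dist_zero_sub_of_invariant (x y : X) : dist 0 (x - y) = dist y x := by
  simpa using (hinv 0 (x - y) y).symm

lemma dist_neg_neg_of_invariant (x y : X) : dist (-x) (-y) = dist x y := by
  rw [← hinv (-x) (-y) (x + y), neg_add_cancel_left, add_comm x y, neg_add_cancel_left,
    dist_comm]

lemma dist_add_add_le_of_invariant (x₁ x₂ y₁ y₂ : X) :
    dist (x₁ + x₂) (y₁ + y₂) ≤ dist x₁ y₁ + dist x₂ y₂ :=
  calc dist (x₁ + x₂) (y₁ + y₂) ≤ dist (x₁ + x₂) (y₁ + x₂) + dist (y₁ + x₂) (y₁ + y₂) :=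
        dist_triangle _ _ _
    _ = dist x₁ y₁ + dist x₂ y₂ := by rw [hinv, dist_add_left_of_invariant hinv]

lemma dist_sum_le_sum_dist_of_invariant {ι : Type*} (s : Finset ι) (x y : ι → X) :
    dist (∑ i ∈ s, x i) (∑ i ∈ s, y i) ≤ ∑ i ∈ s, dist (x i) (y i) := by
  induction s using Finset.cons_induction with
  | empty => simp
  | cons i s hi ih =>
    rw [Finset.sum_cons, Finset.sum_cons, Finset.sum_cons]
    exact (dist_add_add_le_of_invariant hinv _ _ _ _).trans (add_le_add le_rfl ih)

end InvariantMetric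

section RiemannIntegral

variable {X : Type*} [MetricSpace X] [AddCommGroup X] [Module ℝ X]
  (hinv : ∀ x y z : X, dist (x + z) (y + z) = dist x y) {f : ℝ → X} {a b c d : ℝ}
include hinv

/-- The mesh bound `1` makes `hscale` applicable to every term of the Riemann sum. -/
lemma dist_riemannSum_smul_le
    (hscale : ∀ l : ℝ, 0 ≤ l → l < 1 → ∀ x y : X, dist (l • x) (l • y) ≤ l * dist x y)
    {y : X} {ε : ℝ} (P : TaggedPartition a b) (hP : P.MeshLT 1)
    (hf : ∀ i < P.n, dist (f (P.s i)) y ≤ ε) :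
    dist (riemannSum f P) ((b - a) • y) ≤ ε * (b - a) := by
  rw [← P.sum_sub_eq, Finset.sum_smul, Finset.mul_sum, riemannSum]
  refine (dist_sum_le_sum_dist_of_invariant hinv _ _ _).trans (Finset.sum_le_sum fun i hi => ?_)
  have hi := Finset.mem_range.1 hi
  have hlen : 0 ≤ P.t (i + 1) - P.t i := sub_nonneg.2 (P.mono i hi).le
  calc dist ((P.t (i + 1) - P.t i) • f (P.s i)) ((P.t (i + 1) - P.t i) • y)
      ≤ (P.t (i + 1) - P.t i) * dist (f (P.s i)) y := hscale _ hlen (hP i hi) _ _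
    _ ≤ ε * (P.t (i + 1) - P.t i) := by rw [mul_comm]; exact mul_le_mul_of_nonneg_right (hf i hi) hlen

lemma HasRiemannIntegral.dist_smul_le
    (hscale : ∀ l : ℝ, 0 ≤ l → l < 1 → ∀ x y : X, dist (l • x) (l • y) ≤ l * dist x y)
    {I y : X} {ε : ℝ} (hab : a < b) (hI : HasRiemannIntegral f a b I)
    (hf : ∀ x ∈ Icc a b, dist (f x) y ≤ ε) :
    dist I ((b - a) • y) ≤ ε * (b - a) := by
  refine le_of_forall_pos_lt_add fun η hη => ?_
  obtain ⟨δ, hδ, hIδ⟩ := hI η hη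
  obtain ⟨P, hP⟩ := TaggedPartition.exists_meshLT hab (lt_min hδ one_pos)
  calc dist I ((b - a) • y) ≤ dist I (riemannSum f P) + dist (riemannSum f P) ((b - a) • y) :=
        dist_triangle _ _ _
    _ < η + ε * (b - a) := by
        refine add_lt_add_of_lt_of_le ?_ ?_
        · rw [dist_comm]; exact hIδ P (hP.mono (min_le_left _ _))
        · exact dist_riemannSum_smul_le hinv hscale P (hP.mono (min_le_right _ _))
            fun i hi => hf _ (P.s_mem_Icc hi)
    _ = ε * (b - a) + η := add_comm _ _

lemma HasRiemannIntegral.sub_left {I J : X} (hac : a < c)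
    (hI : HasRiemannIntegral f a c I) (hJ : HasRiemannIntegral f a d J) :
    HasRiemannIntegral f c d (J - I) := by
  intro ε hε
  obtain ⟨δ₁, hδ₁, hIδ⟩ := hI (ε / 2) (half_pos hε)
  obtain ⟨δ₂, hδ₂, hJδ⟩ := hJ (ε / 2) (half_pos hε)
  obtain ⟨P, hP⟩ := TaggedPartition.exists_meshLT hac (lt_min hδ₁ hδ₂)
  refine ⟨δ₂, hδ₂, fun Q hQ => ?_⟩
  have hPQ := hJδ _ ((hP.mono (min_le_right _ _)).append P Q hQ)
  have hPI := hIδ P (hP.mono (min_le_left _ _))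
  rw [P.riemannSum_append] at hPQ
  calc dist (riemannSum f Q) (J - I)
      = dist (riemannSum f P + riemannSum f Q) (riemannSum f P + (J - I)) :=
        (dist_add_left_of_invariant hinv _ _ _).symm
    _ ≤ dist (riemannSum f P + riemannSum f Q) J + dist J (riemannSum f P + (J - I)) :=
        dist_triangle _ _ _
    _ = dist (riemannSum f P + riemannSum f Q) J + dist I (riemannSum f P) := by
        rw [← hinv I (riemannSum f P) (J - I), add_sub_cancel, add_comm]
    _ < ε / 2 + ε / 2 := add_lt_add hPQ (by rwa [dist_comm])
    _ = ε := add_halves ε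

lemma hasRiemannIntegral_sub_of_primitive {F : ℝ → X} (hFa : F a = 0)
    (hF : ∀ t ∈ Ioc a b, HasRiemannIntegral f a t (F t))
    (hac : a ≤ c) (hcd : c < d) (hdb : d ≤ b) : HasRiemannIntegral f c d (F d - F c) := by
  have hd := hF d ⟨hac.trans_lt hcd, hdb⟩
  rcases hac.eq_or_lt with rfl | hac
  · rwa [hFa, sub_zero]
  · exact (hF c ⟨hac, hcd.le.trans hdb⟩).sub_left hinv hac hd

end RiemannIntegral
theorem primitive_differentiable_at_continuity_points_general
    {X : Type*} [MetricSpace X] [AddCommGroup X] [Module ℝ X]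
    (hinv : ∀ x y z : X, dist (x + z) (y + z) = dist x y)
    (hscale : ∀ l : ℝ, 0 ≤ l → l < 1 → ∀ x y : X, dist (l • x) (l • y) ≤ l * dist x y)
    (a b : ℝ) (f : ℝ → X)
    (F : ℝ → X) (hFa : F a = 0)
    (hF : ∀ t ∈ Set.Ioc a b, HasRiemannIntegral f a t (F t))
    (t : ℝ) (ht : t ∈ Set.Icc a b)
    (hcont : ContinuousWithinAt f (Set.Icc a b) t) :
    ∀ ε > 0, ∃ δ > 0, ∀ s : ℝ, t + s ∈ Set.Icc a b → |s| < δ →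
      dist 0 (F (t + s) - F t - s • f t) ≤ ε * |s| := by
  intro ε hε
  obtain ⟨δ, hδ, hfδ⟩ := Metric.continuousWithinAt_iff.1 hcont ε hε
  have key : ∀ c d, a ≤ c → c < d → d ≤ b → c ≤ t → t ≤ d → d - c < δ →
      dist (F d - F c) ((d - c) • f t) ≤ ε * (d - c) := fun c d hac hcd hdb hct htd hdc =>
    (hasRiemannIntegral_sub_of_primitive hinv hFa hF hac hcd hdb).dist_smul_le hinv hscale hcd
      fun x hx => (hfδ ⟨hac.trans hx.1, hx.2.trans hdb⟩ <| by
        rw [Real.dist_eq, abs_lt]; constructor <;> linarith [hx.1, hx.2]).le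
  refine ⟨δ, hδ, fun s hs hsδ => ?_⟩
  rw [dist_zero_sub_of_invariant hinv]
  rcases lt_trichotomy s 0 with hs₀ | rfl | hs₀
  · rw [abs_of_neg hs₀] at hsδ ⊢
    have h := key (t + s) t hs.1 (by linarith) ht.2 (by linarith) le_rfl (by linarith)
    rwa [sub_add_cancel_left, dist_comm, ← dist_neg_neg_of_invariant hinv, neg_sub, neg_smul,
      neg_neg] at h
  · simp
  · rw [abs_of_pos hs₀] at hsδ ⊢
    have h := key t (t + s) ht.1 (by linarith) hs.2 le_rfl (by linarith) (by linarith)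
    rwa [add_sub_cancel_left, dist_comm] at h

/-- the indefinite Riemann integral is differentiable, with
derivative `f t`, at every continuity point `t` of `f`. -/
theorem primitive_differentiable_at_continuity_points
    {X : Type*} [MetricSpace X] [AddCommGroup X] [Module ℝ X] [CompleteSpace X]
    (hinv : ∀ x y z : X, dist (x + z) (y + z) = dist x y)
    (hscale : ∀ l : ℝ, 0 ≤ l → l < 1 → ∀ x y : X, dist (l • x) (l • y) ≤ l * dist x y)
    (a b : ℝ) (hab : a < b) (f : ℝ → X) (xbar : X)
    (hint : HasRiemannIntegral f a b xbar)
    (F : ℝ → X) (hFa : F a = 0)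
    (hF : ∀ t ∈ Set.Ioc a b, HasRiemannIntegral f a t (F t))
    (t : ℝ) (ht : t ∈ Set.Icc a b)
    (hcont : ContinuousWithinAt f (Set.Icc a b) t) :
    ∀ ε > 0, ∃ δ > 0, ∀ s : ℝ, t + s ∈ Set.Icc a b → |s| < δ →
      dist 0 (F (t + s) - F t - s • f t) ≤ ε * |s| :=
  primitive_differentiable_at_continuity_points_general hinv hscale a b f F hFa hF t ht hcont
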